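/- Built-in constraints are accumulated along CHR computations: if S₀ ↦ S₁ ↦ ⋯ ↦ Sₙ is a computation, then for all i ≤ j, CT ⊨ ∀((Sⱼ)_bi → ∃ȳ (Sᵢ)_bi), i.e., the built-in constraints of any later state imply (an existential closure of) those of any earlier state. -/

import Mathlib

/-- A CHR rule over user atoms `U` and built-in constraints `B`: each transition
(Simplify, Propagate, Simpagate) keeps all built-in constraints of the source state and
only adds new built-in constraints (guard instances, matching equations, body built-ins). -/
structure CHRRule (U B : Type*) where
  appl : Set B → Multiset U → Prop
  bodyUd : Multiset U → Multiset U
  bodyBi : Multiset U → Set B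

/-- One CHR transition step of program `P`. -/
def CHRStep {U B : Type*} [DecidableEq U] (P : Set (CHRRule U B))
    (s t : Multiset U × Set B) : Prop :=
  ∃ r ∈ P, ∃ h : Multiset U, h ≤ s.1 ∧ r.appl s.2 h ∧
    t = (s.1 - h + r.bodyUd h, s.2 ∪ r.bodyBi h)

theorem CHRStep.builtins_subset {U B : Type*} [DecidableEq U] {P : Set (CHRRule U B)}
    {s t : Multiset U × Set B} (h : CHRStep P s t) : s.2 ⊆ t.2 := by
  obtain ⟨r, -, m, -, -, rfl⟩ := h
  exact Set.subset_union_left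

theorem monotoneOn_builtins_of_chrStep {U B : Type*} [DecidableEq U] {P : Set (CHRRule U B)}
    {n : ℕ} {S : ℕ → Multiset U × Set B} (hcomp : ∀ k < n, CHRStep P (S k) (S (k + 1))) :
    MonotoneOn (fun k => (S k).2) (Set.Iic n) :=
  monotoneOn_of_le_succ Set.ordConnected_Iic fun k _ _ hk =>
    (hcomp k (Nat.lt_of_succ_le hk)).builtins_subset

/-- Built-in constraints are accumulated along CHR computations: given a
computation S₀ ↦ S₁ ↦ ⋯ ↦ Sₙ, for all i ≤ j ≤ n the built-in store of Sᵢ is contained in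
that of Sⱼ; consequently CT ⊨ ∀((Sⱼ)_bi → (Sᵢ)_bi): under every interpretation `I` of the
built-in constraints, if all built-ins of the later state Sⱼ hold then all built-ins of the
earlier state Sᵢ hold. -/
theorem builtins_accumulate {U B : Type*} [DecidableEq U]
    (P : Set (CHRRule U B)) (n : ℕ) (S : ℕ → Multiset U × Set B)
    (hcomp : ∀ k < n, CHRStep P (S k) (S (k + 1))) :
    ∀ i j, i ≤ j → j ≤ n →
      (S i).2 ⊆ (S j).2 ∧
      ∀ I : B → Prop, (∀ c ∈ (S j).2, I c) → ∀ c ∈ (S i).2, I c := by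
  intro i j hij hjn
  have hsub : (S i).2 ⊆ (S j).2 :=
    monotoneOn_builtins_of_chrStep hcomp (hij.trans hjn) hjn hij
  exact ⟨hsub, fun I hI c hc => hI c (hsub hc)⟩
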